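/- arXiv:1210.2180 — 2 statements merged into one kernel-verified Lean document; each statement's English description precedes it below -/
import Mathlib

section
/- For fixed u > 0 and fixed ε > 0, the Kirkwood harmonic coefficients M_n(u) := (ε(n+1)k_n(u) + u k_n'(u)) / (ε n k_n(u) − u k_n'(u)) converge as n → ∞ to γ := (ε−1)/(ε+1). -/
/-!
With `w_l = a_{n,l} (2u)^{-l}` the terms of the finite sum in `k_n(u)`, one has
`u k_n'(u) = -(π e^{-u}/(2u)) Σ w_l (u + l + 1)`. Dividing numerator and denominator of `M_n(u)`
by `(n+1) Σ w_l` leaves only the `w`-weighted mean `r_n` of the gap `n - l`: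
`M_n = ((ε-1) + (r_n - u)/(n+1)) / ((ε+1) - (r_n - (u - ε))/(n+1))`.
The top coefficient dominates, `a_{n,n-j} ≤ a_{n,n}/j!`, which gives `0 ≤ r_n ≤ 2u e^{2u}`
uniformly in `n`, hence the limit.
-/

open Filter

/-- The modified spherical Hankel function. -/
noncomputable def sphericalHankel (n : ℕ) (u : ℝ) : ℝ :=
  (Real.pi * Real.exp (-u) / (2 * u)) *
    ∑ l ∈ Finset.range (n + 1),
      ((Nat.factorial (n + l) : ℝ) / (Nat.factorial l * Nat.factorial (n - l))) *
        (1 / (2 * u) ^ l)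

/-- The Kirkwood harmonic coefficients for dielectric ratio `ε`. -/
noncomputable def kirkwoodM (ε : ℝ) (n : ℕ) (u : ℝ) : ℝ :=
  (ε * ((n : ℝ) + 1) * sphericalHankel n u + u * deriv (fun v => sphericalHankel n v) u) /
    (ε * (n : ℝ) * sphericalHankel n u - u * deriv (fun v => sphericalHankel n v) u)

open Finset Real Nat Topology

noncomputable def hankelCoeff (n l : ℕ) : ℝ := (n + l)! / (l ! * (n - l)!)

noncomputable def hankelTerm (n : ℕ) (u : ℝ) (l : ℕ) : ℝ :=
  hankelCoeff n l * (1 / (2 * u) ^ l)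

noncomputable def hankelSum (n : ℕ) (u : ℝ) : ℝ := ∑ l ∈ range (n + 1), hankelTerm n u l

noncomputable def hankelMeanGap (n : ℕ) (u : ℝ) : ℝ :=
  (∑ l ∈ range (n + 1), ((n : ℝ) - l) * hankelTerm n u l) / hankelSum n u

theorem sphericalHankel_eq (n : ℕ) (u : ℝ) :
    sphericalHankel n u = π * exp (-u) / (2 * u) * hankelSum n u := rfl

theorem hankelTerm_pos (n l : ℕ) {u : ℝ} (hu : 0 < u) : 0 < hankelTerm n u l := by
  unfold hankelTerm hankelCoeff; positivity

theorem hankelSum_pos (n : ℕ) {u : ℝ} (hu : 0 < u) : 0 < hankelSum n u :=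
  sum_pos (fun l _ => hankelTerm_pos n l hu) nonempty_range_add_one

theorem hasDerivAt_exp_neg_div_pow (k : ℕ) {u : ℝ} (hu : u ≠ 0) :
    HasDerivAt (fun v => exp (-v) / v ^ k) (-(exp (-u) / u ^ k) * (1 + k / u)) u := by
  refine (((hasDerivAt_neg u).exp).fun_div (hasDerivAt_pow k u) (pow_ne_zero k hu)).congr_deriv ?_
  rcases k with _ | k
  · simp
  · field_simp
    push_cast
    ring

theorem mul_deriv_sphericalHankel (n : ℕ) {u : ℝ} (hu : u ≠ 0) :
    u * deriv (fun v => sphericalHankel n v) u =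
      -(π * exp (-u) / (2 * u)) * ∑ l ∈ range (n + 1), hankelTerm n u l * (u + l + 1) := by
  have hsplit : (fun v => sphericalHankel n v) = fun v =>
      ∑ l ∈ range (n + 1), π * hankelCoeff n l / 2 ^ (l + 1) * (exp (-v) / v ^ (l + 1)) := by
    funext v
    rw [sphericalHankel_eq, hankelSum, mul_sum]
    refine sum_congr rfl fun l _ => ?_
    unfold hankelTerm
    -- at `v = 0` both sides are junk values `… / 0 = 0`
    rcases eq_or_ne v 0 with rfl | hv
    · simp
    · field_simp
      ring
  have hderiv := HasDerivAt.fun_sum fun l (_ : l ∈ range (n + 1)) =>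
    (hasDerivAt_exp_neg_div_pow (l + 1) hu).const_mul (π * hankelCoeff n l / 2 ^ (l + 1))
  rw [hsplit, hderiv.deriv, mul_sum, mul_sum]
  refine sum_congr rfl fun l _ => ?_
  unfold hankelTerm
  field_simp
  push_cast
  ring

theorem factorial_sub_mul_factorial_le {j n m : ℕ} (hjn : j ≤ n) (hnm : n ≤ m) :
    (m - j)! * n ! ≤ m ! * (n - j)! := by
  rw [← factorial_mul_descFactorial (hjn.trans hnm), ← factorial_mul_descFactorial hjn]
  calc (m - j)! * ((n - j)! * n.descFactorial j)
      ≤ (m - j)! * ((n - j)! * m.descFactorial j) := by gcongr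
    _ = (m - j)! * m.descFactorial j * (n - j)! := by ring

theorem hankelCoeff_sub_le {n j : ℕ} (hj : j ≤ n) :
    hankelCoeff n (n - j) ≤ hankelCoeff n n / j ! := by
  unfold hankelCoeff
  rw [show n + (n - j) = 2 * n - j by omega, show n - (n - j) = j by omega, ← two_mul,
    Nat.sub_self, factorial_zero, cast_one, mul_one, div_div,
    div_le_div_iff₀ (by positivity) (by positivity)]
  have h := factorial_sub_mul_factorial_le hj (by omega : n ≤ 2 * n)
  have h' : ((2 * n - j)! * n ! : ℝ) ≤ (2 * n)! * (n - j)! := by exact_mod_cast h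
  calc ((2 * n - j)! : ℝ) * (n ! * j !) = (2 * n - j)! * n ! * j ! := by ring
    _ ≤ (2 * n)! * (n - j)! * j ! := by gcongr
    _ = (2 * n)! * ((n - j)! * j !) := by ring

theorem sum_range_mul_pow_div_factorial_le {y : ℝ} (hy : 0 ≤ y) (m : ℕ) :
    ∑ j ∈ range m, (j : ℝ) * y ^ j / j ! ≤ y * exp y := by
  rcases m with _ | m
  · rw [sum_range_zero]; positivity
  rw [sum_range_succ', cast_zero, zero_mul, zero_div, add_zero]
  calc ∑ j ∈ range m, ((j + 1 : ℕ) : ℝ) * y ^ (j + 1) / (j + 1)!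
      = y * ∑ j ∈ range m, y ^ j / j ! := by
        rw [mul_sum]
        refine sum_congr rfl fun j _ => ?_
        rw [factorial_succ, pow_succ]
        push_cast
        field_simp
    _ ≤ y * exp y := by gcongr; exact sum_le_exp_of_nonneg hy m

theorem hankelTerm_sub_le {n j : ℕ} (hj : j ≤ n) {u : ℝ} (hu : 0 < u) :
    hankelTerm n u (n - j) ≤ (2 * u) ^ j / j ! * hankelTerm n u n := by
  have hpow : 1 / (2 * u) ^ (n - j) = (2 * u) ^ j * (1 / (2 * u) ^ n) := by
    rw [← pow_sub_mul_pow (2 * u) hj]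
    field_simp
  unfold hankelTerm
  rw [hpow]
  calc hankelCoeff n (n - j) * ((2 * u) ^ j * (1 / (2 * u) ^ n))
      ≤ hankelCoeff n n / j ! * ((2 * u) ^ j * (1 / (2 * u) ^ n)) := by
        gcongr; exact hankelCoeff_sub_le hj
    _ = (2 * u) ^ j / j ! * (hankelCoeff n n * (1 / (2 * u) ^ n)) := by ring

theorem hankelMeanGap_nonneg (n : ℕ) {u : ℝ} (hu : 0 < u) : 0 ≤ hankelMeanGap n u := by
  refine div_nonneg (sum_nonneg fun l hl => ?_) (hankelSum_pos n hu).le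
  have : (l : ℝ) ≤ n := by exact_mod_cast Nat.lt_succ_iff.1 (mem_range.1 hl)
  exact mul_nonneg (by linarith) (hankelTerm_pos n l hu).le

theorem hankelMeanGap_le (n : ℕ) {u : ℝ} (hu : 0 < u) :
    hankelMeanGap n u ≤ 2 * u * exp (2 * u) := by
  have hS := hankelSum_pos n hu
  rw [hankelMeanGap, div_le_iff₀ hS, ← sum_range_reflect]
  calc ∑ j ∈ range (n + 1), ((n : ℝ) - (n + 1 - 1 - j : ℕ)) * hankelTerm n u (n + 1 - 1 - j)
      ≤ ∑ j ∈ range (n + 1), (j : ℝ) * (2 * u) ^ j / j ! * hankelTerm n u n := by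
        refine sum_le_sum fun j hj => ?_
        have hjn : j ≤ n := Nat.lt_succ_iff.1 (mem_range.1 hj)
        rw [Nat.add_sub_cancel, cast_sub hjn, sub_sub_cancel, mul_div_assoc, mul_assoc]
        gcongr
        exact hankelTerm_sub_le hjn hu
    _ = (∑ j ∈ range (n + 1), (j : ℝ) * (2 * u) ^ j / j !) * hankelTerm n u n := by
        rw [sum_mul]
    _ ≤ 2 * u * exp (2 * u) * hankelSum n u := by
        gcongr
        · exact (hankelTerm_pos n n hu).le
        · exact sum_range_mul_pow_div_factorial_le (by positivity) _
        · exact single_le_sum (fun l _ => (hankelTerm_pos n l hu).le) (self_mem_range_succ n)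

theorem kirkwoodM_eq (ε : ℝ) (n : ℕ) {u : ℝ} (hu : 0 < u) :
    kirkwoodM ε n u =
      ((ε - 1) + (hankelMeanGap n u - u) / (n + 1)) /
        ((ε + 1) - (hankelMeanGap n u - (u - ε)) / (n + 1)) := by
  have hS := (hankelSum_pos n hu).ne'
  have hC : π * exp (-u) / (2 * u) ≠ 0 := by have := pi_pos; positivity
  have hsum : ∑ l ∈ range (n + 1), hankelTerm n u l * (u + l + 1) =
      (u + n + 1 - hankelMeanGap n u) * hankelSum n u := by
    rw [hankelMeanGap, sub_mul, div_mul_cancel₀ _ hS, hankelSum, mul_sum, ← sum_sub_distrib]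
    exact sum_congr rfl fun l _ => by ring
  rw [kirkwoodM, mul_deriv_sphericalHankel n hu.ne', hsum, sphericalHankel_eq]
  field_simp
  ring_nf

theorem tendsto_div_natCast_add_one_of_abs_le {f : ℕ → ℝ} {B : ℝ}
    (hf : ∀ n, |f n| ≤ B) :
    Tendsto (fun n => f n / (n + 1)) atTop (𝓝 0) := by
  have hlim : Tendsto (fun n : ℕ => B / (n + 1 : ℝ)) atTop (𝓝 0) := by
    simpa [div_eq_mul_inv] using tendsto_one_div_add_atTop_nhds_zero_nat.const_mul B
  refine squeeze_zero_norm (fun n => ?_) hlim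
  rw [norm_div, Real.norm_eq_abs, Real.norm_eq_abs, abs_of_pos (n.cast_add_one_pos (α := ℝ))]
  gcongr
  exact hf n

theorem tendsto_hankelMeanGap_sub_div (c : ℝ) {u : ℝ} (hu : 0 < u) :
    Tendsto (fun n : ℕ => (hankelMeanGap n u - c) / (n + 1)) atTop (𝓝 0) := by
  refine tendsto_div_natCast_add_one_of_abs_le (B := 2 * u * exp (2 * u) + |c|) fun n => ?_
  refine (abs_sub _ _).trans (add_le_add_left ?_ _)
  rw [abs_of_nonneg (hankelMeanGap_nonneg n hu)]
  exact hankelMeanGap_le n hu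

/-- For fixed `u > 0` and `ε > 0`, `M_n(u) → (ε-1)/(ε+1)` as `n → ∞`. -/
theorem tendsto_kirkwoodM (u ε : ℝ) (hu : 0 < u) (hε : 0 < ε) :
    Tendsto (fun n : ℕ => kirkwoodM ε n u) atTop (nhds ((ε - 1) / (ε + 1))) := by
  have hlim := ((tendsto_const_nhds (x := ε - 1)).add (tendsto_hankelMeanGap_sub_div u hu)).div
    ((tendsto_const_nhds (x := ε + 1)).sub (tendsto_hankelMeanGap_sub_div (u - ε) hu))
    (by simpa using (add_pos hε one_pos).ne')
  rw [add_zero, sub_zero] at hlim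
  exact hlim.congr fun n => (kirkwoodM_eq ε n hu).symm
end

section
/- For dielectric ratio ε = 1 and fixed u > 0, the harmonic coefficients M_n(u) := ((n+1)k_n(u) + u k_n'(u)) / (n k_n(u) − u k_n'(u)) satisfy n²·M_n(u) → −u²/4 as n → ∞; in particular M_n(u) = O(1/n²) and Σ_{n=0}^∞ M_n(u) converges absolutely. -/
/-!
Up to the factor `π e^{-u} / (2u)`, `k_n(u)` is the Bessel polynomial `y_n(1/u)`, so the
recurrence `y_{n+1}(x) = (2n+1) x y_n(x) + y_{n-1}(x)` gives `k_{n+1} = k_{n-1} + (2n+1)/u · k_n`,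
and by induction `u k_n' = n k_n - u k_{n+1}`. Hence `M_n = -k_{n-1} / k_{n+1}`. The ratios
`ρ_n = k_{n-1} / k_n > 0` satisfy `1 / ρ_{n+1} = ρ_n + (2n+1)/u`, so `ρ_n ≤ u / (2n-1) → 0` and
then `n ρ_{n+1} → u/2`; thus `n² M_n = -(n ρ_n)(n ρ_{n+1}) → -u²/4`, and `M_n = O(1/n²)` is
absolutely summable.
-/

open Filter

/-- The Kirkwood harmonic coefficients for dielectric ratio `ε = 1`. -/
noncomputable def kirkwoodM1 (n : ℕ) (u : ℝ) : ℝ :=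
  (((n : ℝ) + 1) * sphericalHankel n u + u * deriv (fun v => sphericalHankel n v) u) /
    ((n : ℝ) * sphericalHankel n u - u * deriv (fun v => sphericalHankel n v) u)

open Finset Nat Real Topology

/-- The coefficient `(n+l)! / (l! (n-l)!)` of the Bessel polynomial `y_n`, written so that it
vanishes for `l > n` (the formula in `sphericalHankel` does not, by truncated subtraction). -/
noncomputable def besselCoeff (n l : ℕ) : ℝ := n.choose l * ((n + l)! / n ! : ℝ)

lemma besselCoeff_of_le {n l : ℕ} (h : l ≤ n) :
    besselCoeff n l = (n + l)! / (l ! * (n - l)! : ℝ) := by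
  rw [besselCoeff, Nat.cast_choose ℝ h]
  field_simp

lemma besselCoeff_of_lt {n l : ℕ} (h : n < l) : besselCoeff n l = 0 := by
  simp [besselCoeff, Nat.choose_eq_zero_of_lt h]

lemma besselCoeff_nonneg (n l : ℕ) : 0 ≤ besselCoeff n l := by
  unfold besselCoeff
  positivity

lemma besselCoeff_zero_right (n : ℕ) : besselCoeff n 0 = 1 := by
  simp [besselCoeff, (Nat.factorial_pos n).ne']

lemma besselCoeff_add_two (n l : ℕ) :
    besselCoeff (n + 2) (l + 1) =
      besselCoeff n (l + 1) + 2 * (2 * n + 3) * besselCoeff (n + 1) l := by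
  rcases (show l + 1 ≤ n ∨ n = l ∨ l = n + 1 ∨ n + 2 ≤ l by omega) with hl | rfl | rfl | hl
  · obtain ⟨k, rfl⟩ : ∃ k, n = l + 1 + k := ⟨n - (l + 1), by omega⟩
    rw [besselCoeff_of_le (by omega), besselCoeff_of_le (by omega), besselCoeff_of_le (by omega),
      show l + 1 + k + 2 - (l + 1) = k + 2 by omega, show l + 1 + k - (l + 1) = k by omega,
      show l + 1 + k + 1 - l = k + 2 by omega,
      show l + 1 + k + 2 + (l + 1) = 2 * l + k + 2 + 2 by omega,
      show l + 1 + k + (l + 1) = 2 * l + k + 2 by omega,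
      show l + 1 + k + 1 + l = 2 * l + k + 2 by omega]
    simp only [Nat.factorial_succ]
    push_cast
    field_simp
    ring
  · rw [besselCoeff_of_lt (lt_add_one n), besselCoeff_of_le (by omega : n + 1 ≤ n + 2),
      besselCoeff_of_le (by omega : n ≤ n + 1), show n + 2 - (n + 1) = 1 by omega,
      show n + 1 - n = 1 by omega, show n + 2 + (n + 1) = 2 * n + 1 + 2 by omega,
      show n + 1 + n = 2 * n + 1 by omega]
    simp only [Nat.factorial_succ]
    push_cast
    field_simp
    ring
  · rw [besselCoeff_of_lt (by omega : n < n + 1 + 1), besselCoeff_of_le (le_refl (n + 2)),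
      besselCoeff_of_le (le_refl (n + 1)), Nat.sub_self, Nat.sub_self,
      show n + 2 + (n + 1 + 1) = 2 * n + 2 + 2 by omega, show n + 1 + (n + 1) = 2 * n + 2 by omega]
    simp only [Nat.factorial_succ]
    push_cast
    field_simp
    ring
  · rw [besselCoeff_of_lt (by omega), besselCoeff_of_lt (by omega), besselCoeff_of_lt (by omega)]
    ring

noncomputable def besselPoly (n : ℕ) (x : ℝ) : ℝ :=
  ∑ l ∈ range (n + 1), besselCoeff n l * (x / 2) ^ l

lemma besselPoly_eq_sum_range {n N : ℕ} (h : n < N) (x : ℝ) :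
    besselPoly n x = ∑ l ∈ range N, besselCoeff n l * (x / 2) ^ l :=
  sum_subset (range_subset_range.mpr h) fun l _ hln => by
    rw [besselCoeff_of_lt (by simpa using hln), zero_mul]

lemma besselPoly_add_two (n : ℕ) (x : ℝ) :
    besselPoly (n + 2) x = (2 * n + 3) * x * besselPoly (n + 1) x + besselPoly n x := by
  have hshift : ∑ l ∈ range (n + 2), 2 * (2 * n + 3) * besselCoeff (n + 1) l * (x / 2) ^ (l + 1)
      = (2 * n + 3) * x * besselPoly (n + 1) x := by
    rw [besselPoly, mul_sum]
    exact sum_congr rfl fun l _ => by ring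
  rw [besselPoly, sum_range_succ', besselPoly_eq_sum_range (by omega : n < n + 3),
    sum_range_succ' _ (n + 2), ← hshift]
  simp only [besselCoeff_add_two, besselCoeff_zero_right, add_mul, sum_add_distrib]
  ring

lemma besselPoly_pos (n : ℕ) {x : ℝ} (hx : 0 ≤ x) : 0 < besselPoly n x := by
  rw [besselPoly, sum_range_succ', besselCoeff_zero_right, pow_zero, mul_one]
  have := sum_nonneg fun l (_ : l ∈ range n) =>
    mul_nonneg (besselCoeff_nonneg n (l + 1)) (pow_nonneg (div_nonneg hx zero_le_two) (l + 1))
  linarith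

lemma sphericalHankel_eq_besselPoly (n : ℕ) (u : ℝ) :
    sphericalHankel n u = π * exp (-u) / (2 * u) * besselPoly n (1 / u) := by
  rw [sphericalHankel, besselPoly]
  congr 1
  refine sum_congr rfl fun l hl => ?_
  rw [besselCoeff_of_le (by simpa [Nat.lt_succ_iff] using hl)]
  congr 1
  rw [div_div, one_div_pow, mul_comm]

lemma sphericalHankel_pos (n : ℕ) {u : ℝ} (hu : 0 < u) : 0 < sphericalHankel n u := by
  rw [sphericalHankel_eq_besselPoly]
  have := besselPoly_pos n (one_div_pos.mpr hu).le
  positivity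

lemma sphericalHankel_add_two (n : ℕ) (u : ℝ) :
    sphericalHankel (n + 2) u =
      sphericalHankel n u + (2 * n + 3) / u * sphericalHankel (n + 1) u := by
  rw [sphericalHankel_eq_besselPoly, sphericalHankel_eq_besselPoly, sphericalHankel_eq_besselPoly,
    besselPoly_add_two]
  ring

lemma sphericalHankel_zero (u : ℝ) : sphericalHankel 0 u = π * exp (-u) / (2 * u) := by
  rw [sphericalHankel_eq_besselPoly, besselPoly]
  simp [besselCoeff_zero_right]

lemma sphericalHankel_one (u : ℝ) :
    sphericalHankel 1 u = sphericalHankel 0 u * (1 + 1 / u) := by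
  rw [sphericalHankel_eq_besselPoly, sphericalHankel_eq_besselPoly, mul_assoc]
  congr 1
  simp [besselPoly, sum_range_succ, besselCoeff_of_le]
  ring

lemma hasDerivAt_sphericalHankel (n : ℕ) {u : ℝ} (hu : u ≠ 0) :
    HasDerivAt (sphericalHankel n) (n / u * sphericalHankel n u - sphericalHankel (n + 1) u) u := by
  have h0 : HasDerivAt (sphericalHankel 0) (-(sphericalHankel 0 u * (1 + 1 / u))) u := by
    rw [show sphericalHankel 0 = fun v => π * exp (-v) / (2 * v) from funext sphericalHankel_zero]
    refine (((hasDerivAt_neg u).exp.const_mul π).div ((hasDerivAt_id u).const_mul 2)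
      (mul_ne_zero two_ne_zero hu)).congr_deriv ?_
    simp only [id]
    field_simp
    ring
  induction n using Nat.twoStepInduction with
  | zero => simpa [sphericalHankel_one] using h0
  | one =>
    rw [show sphericalHankel 1 = fun v => sphericalHankel 0 v * (1 + 1 / v) from
      funext sphericalHankel_one]
    refine (h0.mul ((hasDerivAt_const u 1).add
      ((hasDerivAt_const u 1).div (hasDerivAt_id u) hu))).congr_deriv ?_
    simp only [id, Pi.add_apply, Pi.div_apply]
    rw [sphericalHankel_add_two, sphericalHankel_one]
    field_simp
    ring
  | more n hn hn1 =>
    rw [show sphericalHankel (n + 2) =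
        fun v => sphericalHankel n v + (2 * n + 3) / v * sphericalHankel (n + 1) v from
      funext (sphericalHankel_add_two n)]
    refine (hn.add (((hasDerivAt_const u _).div (hasDerivAt_id u) hu).mul hn1)).congr_deriv ?_
    simp only [id, Pi.div_apply]
    rw [sphericalHankel_add_two (n + 1), sphericalHankel_add_two n]
    push_cast
    field_simp
    ring

section ThreeTermRecurrence

variable {a : ℕ → ℝ} {c : ℝ}

lemma tendsto_ratio_zero_of_recurrence (hc : 0 < c) (ha : ∀ n, 0 < a n)
    (hrec : ∀ n, a (n + 2) = a n + (2 * n + 3) / c * a (n + 1)) :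
    Tendsto (fun n => a n / a (n + 1)) atTop (𝓝 0) := by
  rw [← tendsto_add_atTop_iff_nat 1]
  have hbound (n : ℕ) : a (n + 1) / a (n + 2) ≤ c * (1 / ((n : ℝ) + 1)) := by
    have := ha n
    have := ha (n + 1)
    rw [div_le_iff₀ (ha _), hrec,
      show c * (1 / ((n : ℝ) + 1)) * (a n + (2 * n + 3) / c * a (n + 1))
        = (c * a n + (2 * n + 3) * a (n + 1)) / (n + 1) by field_simp,
      le_div_iff₀ (by positivity)]
    nlinarith
  exact squeeze_zero (fun n => (div_pos (ha _) (ha _)).le) hbound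
    (by simpa using tendsto_one_div_add_atTop_nhds_zero_nat.const_mul c)

lemma tendsto_natCast_mul_ratio_of_recurrence (hc : 0 < c) (ha : ∀ n, 0 < a n)
    (hrec : ∀ n, a (n + 2) = a n + (2 * n + 3) / c * a (n + 1)) :
    Tendsto (fun n : ℕ => n * (a n / a (n + 1))) atTop (𝓝 (c / 2)) := by
  have hinv : Tendsto (fun n : ℕ => a n / a (n + 1) * (1 / ((n : ℝ) + 1)) +
      (2 + 1 / ((n : ℝ) + 1)) / c) atTop (𝓝 (0 * 0 + (2 + 0) / c)) :=
    ((tendsto_ratio_zero_of_recurrence hc ha hrec).mul tendsto_one_div_add_atTop_nhds_zero_nat).add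
      ((tendsto_one_div_add_atTop_nhds_zero_nat.const_add 2).div_const c)
  rw [← tendsto_add_atTop_iff_nat 1]
  convert hinv.inv₀ (by positivity) using 1
  · funext n
    have := ha n
    have := ha (n + 1)
    rw [hrec]
    push_cast
    field_simp
    ring
  · field_simp
    norm_num

end ThreeTermRecurrence

lemma summable_abs_of_tendsto_sq_mul {f : ℕ → ℝ} {L : ℝ}
    (h : Tendsto (fun n : ℕ => (n : ℝ) ^ 2 * f n) atTop (𝓝 L)) : Summable fun n => |f n| := by
  refine summable_of_isBigO_nat (Real.summable_one_div_nat_pow.mpr one_lt_two) ?_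
  have hO := ((h.isBigO_one ℝ).mul
    (Asymptotics.isBigO_refl (fun n : ℕ => 1 / (n : ℝ) ^ 2) atTop)).norm_left
  simp only [one_mul] at hO
  refine hO.congr' ?_ EventuallyEq.rfl
  filter_upwards [eventually_ne_atTop 0] with n hn
  rw [Real.norm_eq_abs]
  congr 1
  field_simp

lemma kirkwoodM1_succ {u : ℝ} (hu : 0 < u) (n : ℕ) :
    kirkwoodM1 (n + 1) u = -(sphericalHankel n u / sphericalHankel (n + 2) u) := by
  have hderiv := (hasDerivAt_sphericalHankel (n + 1) hu.ne').deriv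
  have hnum : ((n + 1 : ℕ) + 1) * sphericalHankel (n + 1) u
      + u * deriv (sphericalHankel (n + 1)) u = -(u * sphericalHankel n u) := by
    rw [hderiv, sphericalHankel_add_two]
    push_cast
    field_simp
    ring
  have hden : ((n + 1 : ℕ) : ℝ) * sphericalHankel (n + 1) u - u * deriv (sphericalHankel (n + 1)) u
      = u * sphericalHankel (n + 2) u := by
    rw [hderiv]
    field_simp
    ring
  rw [kirkwoodM1, hnum, hden, neg_div, mul_div_mul_left _ _ hu.ne']

/-- For `ε = 1` and fixed `u > 0`, `n² M_n(u) → −u²/4`; in particular the series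
`Σ M_n(u)` converges absolutely. -/
theorem kirkwoodM1_asymptotics (u : ℝ) (hu : 0 < u) :
    Tendsto (fun n : ℕ => (n : ℝ) ^ 2 * kirkwoodM1 n u) atTop (nhds (-(u ^ 2) / 4)) ∧
    Summable (fun n : ℕ => |kirkwoodM1 n u|) := by
  have hpos (n : ℕ) := sphericalHankel_pos n hu
  have hrec (n : ℕ) := sphericalHankel_add_two n u
  have hratio := tendsto_ratio_zero_of_recurrence hu hpos hrec
  have hmul := tendsto_natCast_mul_ratio_of_recurrence hu hpos hrec
  have hlim : Tendsto (fun n : ℕ => (n : ℝ) ^ 2 * kirkwoodM1 n u) atTop (𝓝 (-(u ^ 2) / 4)) := by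
    rw [← tendsto_add_atTop_iff_nat 1]
    have hshift := (tendsto_add_atTop_iff_nat 1).mpr hmul
    convert ((hmul.add hratio).mul hshift).neg using 1
    · funext n
      rw [kirkwoodM1_succ hu]
      have := hpos (n + 1)
      push_cast
      field_simp
    · congr 1
      ring
  exact ⟨hlim, summable_abs_of_tendsto_sq_mul hlim⟩
end
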